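/- As F_2-vector spaces, τ(N_1(2j)) = (N_2(j-2) ⊗ (A(2) // A(1))_*) ⊕ (M_2(j-1) ⊗ F_2{1, ξ̄_1^4, ξ̄_2^2, ξ̄_3, ξ̄_1^4 ξ̄_2^2, ξ̄_1^4 ξ̄_3, ξ̄_2^2 ξ̄_3}) ⊕ (M_2(j) ⊗ F_2{1}), i.e. the monomials of N_1(2j) split according to their degree-8 part and exterior residue, with only the top-weight exterior class ξ̄_1^4 ξ̄_2^2 ξ̄_3 omitted in the M_2(j-1) factor and only 1 allowed in the M_2(j) factor. -/

import Mathlib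

open TensorProduct

/-- The mod 2 dual Steenrod algebra on the conjugate generators:
`MvPolynomial.X k` represents `ξ̄_{k+1}`. -/
abbrev DualSteenrod : Type := MvPolynomial ℕ (ZMod 2)

/-- Brown-Gitler weight: `ξ̄_{k+1}` has weight `2^k`. -/
def bgWeight (d : ℕ →₀ ℕ) : ℕ := d.sum fun k e => e * 2 ^ k

/-- Exterior residue `(4ε₁, 2ε₂, ε₃, 0, …)` of an exponent. -/
noncomputable def dLow (d : ℕ →₀ ℕ) : ℕ →₀ ℕ :=
  Finsupp.single 0 (d 0 % 8) + Finsupp.single 1 (d 1 % 4) + Finsupp.single 2 (d 2 % 2)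

/-- 2-divisible part `(8i₁, 4i₂, 2i₃, i₄, …)` of an exponent. -/
noncomputable def dHigh (d : ℕ →₀ ℕ) : ℕ →₀ ℕ := d - dLow d

/-- The monomial-splitting map `τ : (A ⫽ A(1))_* → (A ⫽ A(2))_* ⊗ (A(2) ⫽ A(1))_*`. -/
noncomputable def tau : DualSteenrod →ₗ[ZMod 2] DualSteenrod ⊗[ZMod 2] DualSteenrod :=
  (MvPolynomial.basisMonomials ℕ (ZMod 2)).constr (ZMod 2) fun d =>
    (MvPolynomial.monomial (dHigh d) 1) ⊗ₜ[ZMod 2] (MvPolynomial.monomial (dLow d) 1)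

def isAA1 (d : ℕ →₀ ℕ) : Prop := 4 ∣ d 0 ∧ 2 ∣ d 1

def isAA2 (d : ℕ →₀ ℕ) : Prop := 8 ∣ d 0 ∧ 4 ∣ d 1 ∧ 2 ∣ d 2

def isExtMono (d : ℕ →₀ ℕ) : Prop :=
  (d 0 = 0 ∨ d 0 = 4) ∧ (d 1 = 0 ∨ d 1 = 2) ∧ d 2 ≤ 1 ∧ ∀ k, 3 ≤ k → d k = 0

/-- The bo-Brown-Gitler comodule `N₁(m)`: span of monomials of `(A ⫽ A(1))_*` of
Brown-Gitler filtration at most `4m`. -/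
noncomputable def N1 (m : ℕ) : Submodule (ZMod 2) DualSteenrod :=
  Submodule.span (ZMod 2)
    {x | ∃ d, isAA1 d ∧ bgWeight d ≤ 4 * m ∧ x = MvPolynomial.monomial d 1}

/-- Exterior monomials in `N₁(1) = F₂{1, ξ̄_1^4, ξ̄_2^2, ξ̄_3}`. -/
def isN11Mono (d : ℕ →₀ ℕ) : Prop := isExtMono d ∧ bgWeight d ≤ 4

/-- `N₂(j-2) ⊗ (A(2) ⫽ A(1))_*`: basis tensors whose left factor has Brown-Gitler
weight at most `8(j-2)` (the condition is written as `wt a + 16 ≤ 8j`, so that the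
piece is empty when `j = 1`). -/
noncomputable def T1 (j : ℕ) : Submodule (ZMod 2) (DualSteenrod ⊗[ZMod 2] DualSteenrod) :=
  Submodule.span (ZMod 2)
    {t | ∃ a b : ℕ →₀ ℕ, isAA2 a ∧ bgWeight a + 16 ≤ 8 * j ∧ isExtMono b ∧
      t = (MvPolynomial.monomial a 1) ⊗ₜ[ZMod 2] (MvPolynomial.monomial b 1)}

/-- `M₂(j-1) ⊗ F₂{1, ξ̄_1^4, ξ̄_2^2, ξ̄_3, ξ̄_1^4ξ̄_2^2, ξ̄_1^4ξ̄_3, ξ̄_2^2ξ̄_3}`: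
left weight exactly `8(j-1)` and the top exterior class `ξ̄_1^4ξ̄_2^2ξ̄_3` (of
Brown-Gitler weight 12) omitted, i.e. right weight at most 8. -/
noncomputable def T2 (j : ℕ) : Submodule (ZMod 2) (DualSteenrod ⊗[ZMod 2] DualSteenrod) :=
  Submodule.span (ZMod 2)
    {t | ∃ a b : ℕ →₀ ℕ, isAA2 a ∧ bgWeight a = 8 * (j - 1) ∧ isExtMono b ∧ bgWeight b ≤ 8 ∧
      t = (MvPolynomial.monomial a 1) ⊗ₜ[ZMod 2] (MvPolynomial.monomial b 1)}

/-- `M₂(j) ⊗ F₂{1}`: left weight exactly `8j`, right factor `1`. -/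
noncomputable def T3 (j : ℕ) : Submodule (ZMod 2) (DualSteenrod ⊗[ZMod 2] DualSteenrod) :=
  Submodule.span (ZMod 2)
    {t | ∃ a : ℕ →₀ ℕ, isAA2 a ∧ bgWeight a = 8 * j ∧
      t = (MvPolynomial.monomial a 1) ⊗ₜ[ZMod 2] (1 : DualSteenrod)}


/-!
Every exponent `d` of `(A ⫽ A(1))_*` splits uniquely as `dHigh d + dLow d` with `dHigh d` an
exponent of `(A ⫽ A(2))_*` and `dLow d` an exterior exponent, and the Brown-Gitler weight is
additive. So `τ` carries the monomial basis of `N₁(2j)` bijectively onto the basis tensors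
`a ⊗ b` with `wt a + wt b ≤ 8j`. Since `8 ∣ wt a` and `wt b ≤ 12`, such a pair has either
`wt a ≤ 8(j-2)`, or `wt a = 8(j-1)` and `wt b ≤ 8`, or `wt a = 8j` and `b = 0`; the three cases
are exclusive for `j ≥ 1`, and spans of disjoint parts of a basis meet trivially.
-/

lemma bgWeight_add (a b : ℕ →₀ ℕ) : bgWeight (a + b) = bgWeight a + bgWeight b :=
  Finsupp.sum_add_index (by simp) (by intros; ring)

lemma bgWeight_eq_zero_iff {d : ℕ →₀ ℕ} : bgWeight d = 0 ↔ d = 0 := by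
  refine ⟨fun h => ?_, fun h => by simp [h, bgWeight]⟩
  ext k
  by_contra hk
  have hterm := Finset.sum_eq_zero_iff.mp h k (Finsupp.mem_support_iff.mpr hk)
  simp_all

lemma bgWeight_of_support_subset {d : ℕ →₀ ℕ} (hd : ∀ k, 3 ≤ k → d k = 0) :
    bgWeight d = d 0 + d 1 * 2 + d 2 * 4 := by
  have hs : d.support ⊆ {0, 1, 2} := by
    intro k hk
    simp only [Finset.mem_insert, Finset.mem_singleton]
    by_contra h
    exact Finsupp.mem_support_iff.mp hk (hd k (by omega))
  rw [bgWeight, Finsupp.sum_of_support_subset _ hs _ (by simp)]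
  simp [Finset.sum_insert]
  ring

lemma bgWeight_le_twelve_of_isExtMono {b : ℕ →₀ ℕ} (hb : isExtMono b) : bgWeight b ≤ 12 := by
  obtain ⟨h0, h1, h2, hk⟩ := hb
  rw [bgWeight_of_support_subset hk]
  omega

lemma eight_dvd_bgWeight_of_isAA2 {a : ℕ →₀ ℕ} (ha : isAA2 a) : 8 ∣ bgWeight a := by
  obtain ⟨h0, ⟨m1, h1⟩, m2, h2⟩ := ha
  refine Finset.dvd_sum fun k _ => ?_
  rcases k with _ | _ | _ | k
  · simpa using h0
  · exact ⟨m1, by simp [h1]; ring⟩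
  · exact ⟨m2, by simp [h2]; ring⟩
  · exact Dvd.dvd.mul_left ⟨2 ^ k, by ring⟩ _

lemma dLow_apply (d : ℕ →₀ ℕ) (k : ℕ) :
    dLow d k =
      if k = 0 then d 0 % 8 else if k = 1 then d 1 % 4 else if k = 2 then d 2 % 2 else 0 := by
  rcases k with _ | _ | _ | k <;> simp [dLow]

lemma dHigh_apply (d : ℕ →₀ ℕ) (k : ℕ) : dHigh d k = d k - dLow d k := by
  simp [dHigh, Finsupp.tsub_apply]

lemma dLow_le (d : ℕ →₀ ℕ) : dLow d ≤ d := fun k => by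
  rw [dLow_apply]
  rcases k with _ | _ | _ | k <;> simp <;> omega

lemma dHigh_add_dLow (d : ℕ →₀ ℕ) : dHigh d + dLow d = d :=
  tsub_add_cancel_of_le (dLow_le d)

lemma isAA2_dHigh (d : ℕ →₀ ℕ) : isAA2 (dHigh d) := by
  refine ⟨?_, ?_, ?_⟩ <;> rw [dHigh_apply, dLow_apply] <;> simp <;> omega

lemma isExtMono_dLow {d : ℕ →₀ ℕ} (hd : isAA1 d) : isExtMono (dLow d) := by
  obtain ⟨h0, h1⟩ := hd
  refine ⟨?_, ?_, ?_, fun k hk => ?_⟩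
  · simp [dLow_apply]; omega
  · simp [dLow_apply]; omega
  · simp [dLow_apply]; omega
  · simp only [dLow_apply]; split_ifs <;> omega

lemma isExtMono_zero : isExtMono 0 :=
  ⟨Or.inl rfl, Or.inl rfl, Nat.zero_le _, fun _ _ => rfl⟩

section
variable {a b : ℕ →₀ ℕ}

lemma isAA1_add (ha : isAA2 a) (hb : isExtMono b) : isAA1 (a + b) := by
  obtain ⟨⟨m0, h0⟩, ⟨m1, h1⟩, -⟩ := ha
  obtain ⟨e0, e1, -⟩ := hb
  constructor <;> simp only [Finsupp.add_apply, h0, h1] <;> omega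

lemma dLow_add (ha : isAA2 a) (hb : isExtMono b) : dLow (a + b) = b := by
  obtain ⟨⟨m0, h0⟩, ⟨m1, h1⟩, m2, h2⟩ := ha
  obtain ⟨e0, e1, e2, e3⟩ := hb
  ext k
  rw [dLow_apply]
  rcases k with _ | _ | _ | k <;> simp [h0, h1, h2]
  · omega
  · omega
  · omega
  · exact (e3 (k + 3) (by omega)).symm

lemma dHigh_add (ha : isAA2 a) (hb : isExtMono b) : dHigh (a + b) = a := by
  rw [dHigh, dLow_add ha hb, add_tsub_cancel_right]

end

noncomputable def monomialTensorBasis :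
    Module.Basis ((ℕ →₀ ℕ) × (ℕ →₀ ℕ)) (ZMod 2) (DualSteenrod ⊗[ZMod 2] DualSteenrod) :=
  (MvPolynomial.basisMonomials ℕ (ZMod 2)).tensorProduct (MvPolynomial.basisMonomials ℕ (ZMod 2))

lemma monomialTensorBasis_apply (p : (ℕ →₀ ℕ) × (ℕ →₀ ℕ)) :
    monomialTensorBasis p =
      MvPolynomial.monomial p.1 1 ⊗ₜ[ZMod 2] MvPolynomial.monomial p.2 1 := by
  rw [monomialTensorBasis, Module.Basis.tensorProduct_apply, MvPolynomial.coe_basisMonomials]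

lemma tau_monomial (d : ℕ →₀ ℕ) :
    tau (MvPolynomial.monomial d 1) = monomialTensorBasis (dHigh d, dLow d) := by
  rw [monomialTensorBasis_apply, ← congrFun (MvPolynomial.coe_basisMonomials ℕ (ZMod 2)) d, tau,
    Module.Basis.constr_basis]

def splitExponents (n : ℕ) : Set ((ℕ →₀ ℕ) × (ℕ →₀ ℕ)) :=
  {p | isAA2 p.1 ∧ isExtMono p.2 ∧ bgWeight p.1 + bgWeight p.2 ≤ n}

lemma map_tau_N1 (m : ℕ) :
    Submodule.map tau (N1 m) =
      Submodule.span (ZMod 2) (monomialTensorBasis '' splitExponents (4 * m)) := by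
  rw [N1, Submodule.map_span]
  congr 1
  ext t
  constructor
  · rintro ⟨_, ⟨d, hd, hw, rfl⟩, rfl⟩
    refine ⟨(dHigh d, dLow d), ⟨isAA2_dHigh d, isExtMono_dLow hd, ?_⟩, (tau_monomial d).symm⟩
    rwa [← bgWeight_add, dHigh_add_dLow]
  · rintro ⟨⟨a, b⟩, ⟨ha, hb, hw⟩, rfl⟩
    refine ⟨_, ⟨a + b, isAA1_add ha hb, by rwa [bgWeight_add], rfl⟩, ?_⟩
    rw [tau_monomial, dHigh_add ha hb, dLow_add ha hb]

def T1Exponents (j : ℕ) : Set ((ℕ →₀ ℕ) × (ℕ →₀ ℕ)) :=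
  {p | isAA2 p.1 ∧ bgWeight p.1 + 16 ≤ 8 * j ∧ isExtMono p.2}

def T2Exponents (j : ℕ) : Set ((ℕ →₀ ℕ) × (ℕ →₀ ℕ)) :=
  {p | isAA2 p.1 ∧ bgWeight p.1 = 8 * (j - 1) ∧ isExtMono p.2 ∧ bgWeight p.2 ≤ 8}

def T3Exponents (j : ℕ) : Set ((ℕ →₀ ℕ) × (ℕ →₀ ℕ)) :=
  {p | isAA2 p.1 ∧ bgWeight p.1 = 8 * j ∧ p.2 = 0}

lemma T1_eq_span (j : ℕ) :
    T1 j = Submodule.span (ZMod 2) (monomialTensorBasis '' T1Exponents j) := by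
  rw [T1]
  congr 1
  ext t
  constructor
  · rintro ⟨a, b, ha, hw, hb, rfl⟩
    exact ⟨(a, b), ⟨ha, hw, hb⟩, monomialTensorBasis_apply _⟩
  · rintro ⟨⟨a, b⟩, ⟨ha, hw, hb⟩, rfl⟩
    exact ⟨a, b, ha, hw, hb, monomialTensorBasis_apply _⟩

lemma T2_eq_span (j : ℕ) :
    T2 j = Submodule.span (ZMod 2) (monomialTensorBasis '' T2Exponents j) := by
  rw [T2]
  congr 1
  ext t
  constructor
  · rintro ⟨a, b, ha, hw, hb, hwb, rfl⟩
    exact ⟨(a, b), ⟨ha, hw, hb, hwb⟩, monomialTensorBasis_apply _⟩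
  · rintro ⟨⟨a, b⟩, ⟨ha, hw, hb, hwb⟩, rfl⟩
    exact ⟨a, b, ha, hw, hb, hwb, monomialTensorBasis_apply _⟩

lemma T3_eq_span (j : ℕ) :
    T3 j = Submodule.span (ZMod 2) (monomialTensorBasis '' T3Exponents j) := by
  rw [T3]
  congr 1
  ext t
  constructor
  · rintro ⟨a, ha, hw, rfl⟩
    exact ⟨(a, 0), ⟨ha, hw, rfl⟩, monomialTensorBasis_apply _⟩
  · rintro ⟨⟨a, b⟩, ⟨ha, hw, rfl : b = 0⟩, rfl⟩
    exact ⟨a, ha, hw, monomialTensorBasis_apply _⟩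

lemma T1Exponents_union_T2Exponents_union_T3Exponents {j : ℕ} (hj : 1 ≤ j) :
    T1Exponents j ∪ T2Exponents j ∪ T3Exponents j = splitExponents (8 * j) := by
  ext ⟨a, b⟩
  simp only [T1Exponents, T2Exponents, T3Exponents, splitExponents, Set.mem_union,
    Set.mem_ofPred_eq]
  constructor
  · rintro ((⟨ha, hw, hb⟩ | ⟨ha, hw, hb, hwb⟩) | ⟨ha, hw, rfl⟩)
    · exact ⟨ha, hb, by have := bgWeight_le_twelve_of_isExtMono hb; omega⟩
    · exact ⟨ha, hb, by omega⟩
    · exact ⟨ha, isExtMono_zero, by rw [bgWeight_eq_zero_iff.mpr rfl]; omega⟩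
  · rintro ⟨ha, hb, hw⟩
    have h8 := eight_dvd_bgWeight_of_isAA2 ha
    have h12 := bgWeight_le_twelve_of_isExtMono hb
    by_cases h1 : bgWeight a + 16 ≤ 8 * j
    · exact Or.inl (Or.inl ⟨ha, h1, hb⟩)
    by_cases h2 : bgWeight a = 8 * (j - 1)
    · exact Or.inl (Or.inr ⟨ha, h2, hb, by omega⟩)
    · exact Or.inr ⟨ha, by omega, bgWeight_eq_zero_iff.mp (by omega)⟩

/-- as `F₂`-vector spaces,
`τ(N₁(2j)) = (N₂(j-2) ⊗ (A(2) ⫽ A(1))_*) ⊕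
(M₂(j-1) ⊗ F₂{1, ξ̄_1^4, ξ̄_2^2, ξ̄_3, ξ̄_1^4ξ̄_2^2, ξ̄_1^4ξ̄_3, ξ̄_2^2ξ̄_3}) ⊕
(M₂(j) ⊗ F₂{1})`. -/
theorem stmt16 (j : ℕ) (hj : 1 ≤ j) :
    Submodule.map tau (N1 (2 * j)) = T1 j ⊔ T2 j ⊔ T3 j ∧
    Disjoint (T1 j) (T2 j) ∧ Disjoint (T1 j ⊔ T2 j) (T3 j) := by
  have hli := monomialTensorBasis.linearIndependent
  rw [T1_eq_span, T2_eq_span, T3_eq_span, ← Submodule.span_union, ← Submodule.span_union,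
    ← Set.image_union, ← Set.image_union, map_tau_N1, show 4 * (2 * j) = 8 * j by ring,
    T1Exponents_union_T2Exponents_union_T3Exponents hj]
  refine ⟨rfl, hli.disjoint_span_image ?_, hli.disjoint_span_image ?_⟩
  · rw [Set.disjoint_left]
    rintro p ⟨-, hw, -⟩ ⟨-, hw', -⟩
    omega
  · rw [Set.disjoint_left]
    rintro p (⟨-, hw, -⟩ | ⟨-, hw, -⟩) ⟨-, hw', -⟩ <;> omega
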